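/- arXiv:1503.01248 — 3 statements merged into one kernel-verified Lean document; each statement's English description precedes it below -/
import Mathlib

section
/- Let p, q, r be real polynomials in one variable such that r(t) ≠ 0 and p(t)² + q(t)² = r(t)² for every t ∈ [−1,1]. Define φ : S² → ℝ³ by φ(x,y,z) = ((p(z)x − q(z)y)/r(z), (q(z)x + p(z)y)/r(z), z). Then φ maps S² into S², φ is a bijection of S² onto itself, and its inverse is the map ψ(x,y,z) = ((p(z)x + q(z)y)/r(z), (−q(z)x + p(z)y)/r(z), z), i.e. the twisting map built from (p, −q, r). In particular φ is a birational diffeomorphism of S². -/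
open Polynomial

/-- The unit sphere `S² = {(x,y,z) ∈ ℝ³ : x² + y² + z² = 1}`,
with points written as functions `Fin 3 → ℝ`. -/
def sphere2 : Set (Fin 3 → ℝ) := {v | v 0 ^ 2 + v 1 ^ 2 + v 2 ^ 2 = 1}

/-- The twisting map of `S²` associated to a triple `(p, q, r)` of real polynomials:
`(x, y, z) ↦ ((p(z)x − q(z)y)/r(z), (q(z)x + p(z)y)/r(z), z)`. -/
noncomputable def twist (p q r : Polynomial ℝ) (v : Fin 3 → ℝ) : Fin 3 → ℝ :=
  ![(p.eval (v 2) * v 0 - q.eval (v 2) * v 1) / r.eval (v 2),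
    (q.eval (v 2) * v 0 + p.eval (v 2) * v 1) / r.eval (v 2),
    v 2]

/-- `φ` is given on `S²` by polynomial fractions `Fᵢ/G`, where the denominator `G`
does not vanish at any point of `S²`. -/
def HasRegularRep (φ : (Fin 3 → ℝ) → (Fin 3 → ℝ)) : Prop :=
  ∃ (F : Fin 3 → MvPolynomial (Fin 3) ℝ) (G : MvPolynomial (Fin 3) ℝ),
    (∀ v ∈ sphere2, MvPolynomial.eval v G ≠ 0) ∧
    ∀ v ∈ sphere2, ∀ i, φ v i = MvPolynomial.eval v (F i) / MvPolynomial.eval v G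

/-- A birational diffeomorphism of `S²`: a bijection of `S²` onto itself which is given
on `S²` by polynomial fractions with nonvanishing denominator, and whose inverse admits a
representation of the same form. -/
def IsBirationalDiffeo (φ : (Fin 3 → ℝ) → (Fin 3 → ℝ)) : Prop :=
  Set.BijOn φ sphere2 sphere2 ∧ HasRegularRep φ ∧
    ∃ ψ : (Fin 3 → ℝ) → (Fin 3 → ℝ),
      Set.InvOn ψ φ sphere2 sphere2 ∧ HasRegularRep ψ

/-!
On the circle `{z = t}` of `S²` the twisting map is multiplication by the unit complex number
`(p(t) + i q(t)) / r(t)`; since `|p(t) + i q(t)| = |r(t)|`, it preserves the sphere, and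
multiplication by the conjugate `(p(t) − i q(t)) / r(t)`, i.e. the twist by `(p, −q, r)`, undoes
it. Both maps are visibly quotients of polynomials in `x, y, z` with denominator `r(z)`.
-/

lemma MvPolynomial.eval_polynomialAeval_X {R σ : Type*} [CommSemiring R] (v : σ → R) (i : σ)
    (p : R[X]) : eval v (Polynomial.aeval (X i) p) = p.eval (v i) := by
  simpa using (aeval_algHom_apply (aeval v) (X i) p).symm

lemma mem_Icc_of_mem_sphere2 {v : Fin 3 → ℝ} (hv : v ∈ sphere2) : v 2 ∈ Set.Icc (-1 : ℝ) 1 := by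
  have h : v 0 ^ 2 + v 1 ^ 2 + v 2 ^ 2 = 1 := hv
  constructor <;> nlinarith [sq_nonneg (v 0), sq_nonneg (v 1)]

@[simp]
lemma twist_apply_zero (p q r : ℝ[X]) (v : Fin 3 → ℝ) :
    twist p q r v 0 = (p.eval (v 2) * v 0 - q.eval (v 2) * v 1) / r.eval (v 2) := rfl

@[simp]
lemma twist_apply_one (p q r : ℝ[X]) (v : Fin 3 → ℝ) :
    twist p q r v 1 = (q.eval (v 2) * v 0 + p.eval (v 2) * v 1) / r.eval (v 2) := rfl

@[simp]
lemma twist_apply_two (p q r : ℝ[X]) (v : Fin 3 → ℝ) : twist p q r v 2 = v 2 := rfl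

section Pointwise

variable {p q r : ℝ[X]} {v : Fin 3 → ℝ}

lemma twist_mem_sphere2 (hr : r.eval (v 2) ≠ 0)
    (hpqr : p.eval (v 2) ^ 2 + q.eval (v 2) ^ 2 = r.eval (v 2) ^ 2) (hv : v ∈ sphere2) :
    twist p q r v ∈ sphere2 := by
  have hv' : v 0 ^ 2 + v 1 ^ 2 + v 2 ^ 2 = 1 := hv
  show (twist p q r v 0) ^ 2 + (twist p q r v 1) ^ 2 + (twist p q r v 2) ^ 2 = 1
  simp only [twist_apply_zero, twist_apply_one, twist_apply_two]
  field_simp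
  linear_combination (v 0 ^ 2 + v 1 ^ 2) * hpqr + r.eval (v 2) ^ 2 * hv'

lemma twist_neg_twist (hr : r.eval (v 2) ≠ 0)
    (hpqr : p.eval (v 2) ^ 2 + q.eval (v 2) ^ 2 = r.eval (v 2) ^ 2) :
    twist p (-q) r (twist p q r v) = v := by
  funext i
  fin_cases i
  · simp only [Fin.zero_eta, twist_apply_zero, twist_apply_one, twist_apply_two, eval_neg]
    field_simp
    linear_combination v 0 * hpqr
  · simp only [Fin.mk_one, twist_apply_zero, twist_apply_one, twist_apply_two, eval_neg]
    field_simp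
    linear_combination v 1 * hpqr
  · rfl

end Pointwise

section OnSphere

variable {p q r : ℝ[X]}

lemma mapsTo_twist (hr : ∀ t ∈ Set.Icc (-1 : ℝ) 1, r.eval t ≠ 0)
    (hpqr : ∀ t ∈ Set.Icc (-1 : ℝ) 1, p.eval t ^ 2 + q.eval t ^ 2 = r.eval t ^ 2) :
    Set.MapsTo (twist p q r) sphere2 sphere2 := fun _ hv =>
  twist_mem_sphere2 (hr _ (mem_Icc_of_mem_sphere2 hv)) (hpqr _ (mem_Icc_of_mem_sphere2 hv)) hv

lemma invOn_twist (hr : ∀ t ∈ Set.Icc (-1 : ℝ) 1, r.eval t ≠ 0)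
    (hpqr : ∀ t ∈ Set.Icc (-1 : ℝ) 1, p.eval t ^ 2 + q.eval t ^ 2 = r.eval t ^ 2) :
    Set.InvOn (twist p (-q) r) (twist p q r) sphere2 sphere2 := by
  constructor
  · intro v hv
    have hz := mem_Icc_of_mem_sphere2 hv
    exact twist_neg_twist (hr _ hz) (hpqr _ hz)
  · intro v hv
    have hz := mem_Icc_of_mem_sphere2 hv
    simpa using twist_neg_twist (q := -q) (hr _ hz) (by simpa using hpqr _ hz)

lemma hasRegularRep_twist (hr : ∀ t ∈ Set.Icc (-1 : ℝ) 1, r.eval t ≠ 0) :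
    HasRegularRep (twist p q r) := by
  refine ⟨![aeval (.X 2) p * .X 0 - aeval (.X 2) q * .X 1,
      aeval (.X 2) q * .X 0 + aeval (.X 2) p * .X 1, .X 2 * aeval (.X 2) r],
    aeval (.X 2) r, ?_, ?_⟩
  · intro v hv
    rw [MvPolynomial.eval_polynomialAeval_X]
    exact hr _ (mem_Icc_of_mem_sphere2 hv)
  · intro v hv i
    have hrv := hr _ (mem_Icc_of_mem_sphere2 hv)
    fin_cases i <;> simp [MvPolynomial.eval_polynomialAeval_X, hrv]

end OnSphere

/-- if `r` does not vanish on `[−1,1]` and `p² + q² = r²` on `[−1,1]`, then the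
twisting map `φ` built from `(p, q, r)` maps `S²` into `S²`, is a bijection of `S²` onto
itself, its inverse is the twisting map built from `(p, −q, r)`, and `φ` is a birational
diffeomorphism of `S²`. -/
theorem stmt0 (p q r : Polynomial ℝ)
    (hr : ∀ t ∈ Set.Icc (-1 : ℝ) 1, r.eval t ≠ 0)
    (hpqr : ∀ t ∈ Set.Icc (-1 : ℝ) 1, p.eval t ^ 2 + q.eval t ^ 2 = r.eval t ^ 2) :
    Set.MapsTo (twist p q r) sphere2 sphere2 ∧
    Set.BijOn (twist p q r) sphere2 sphere2 ∧
    Set.InvOn (twist p (-q) r) (twist p q r) sphere2 sphere2 ∧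
    IsBirationalDiffeo (twist p q r) := by
  have hpqr' : ∀ t ∈ Set.Icc (-1 : ℝ) 1, p.eval t ^ 2 + (-q).eval t ^ 2 = r.eval t ^ 2 := by
    simpa using hpqr
  have hmaps := mapsTo_twist hr hpqr
  have hinv := invOn_twist hr hpqr
  have hbij := hinv.bijOn hmaps (mapsTo_twist hr hpqr')
  exact ⟨hmaps, hbij, hinv, hbij, hasRegularRep_twist hr,
    twist p (-q) r, hinv, hasRegularRep_twist hr⟩
end

section
/- Let z₁, …, zₙ be pairwise distinct points of the interval [−1,1] and let (a₁,b₁), …, (aₙ,bₙ) ∈ ℝ² satisfy aⱼ² + bⱼ² = 1 for every j. Then there exist real polynomials p, q, r in one variable such that r(t) ≠ 0 for all t ∈ [−1,1], p² + q² = r² as a polynomial identity, and p(zⱼ) = aⱼ·r(zⱼ) and q(zⱼ) = bⱼ·r(zⱼ) for every j = 1, …, n. In other words, there is a rational map from [−1,1] to the unit circle, without poles on [−1,1], taking prescribed values at finitely many prescribed points. -/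
/-!
Rotate the circle by a point `(c, d)` whose antipode is none of the prescribed values. Every
point of the circle other than `(-c, -d)` is then hit by the rotated half-angle parametrisation
`w ↦ (c (1 - w²) - 2 d w, d (1 - w²) + 2 c w) / (1 + w²)`, so it suffices to Lagrange-interpolate
the parameters `wⱼ` by a polynomial `U` and substitute it for `w`; the denominator `1 + U²`
has no real zeros.
-/

open Polynomial

lemma exists_sq_add_sq_eq_one_forall_ne {ι : Type*} [Finite ι] (a : ι → ℝ) :
    ∃ c d : ℝ, c ^ 2 + d ^ 2 = 1 ∧ ∀ i, c ≠ a i := by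
  obtain ⟨c, ⟨hc₁, hc₂⟩, hca⟩ :=
    ((Set.Icc_infinite (by norm_num : (-1 : ℝ) < 1)).sdiff (Set.finite_range a)).nonempty
  have hc : 0 ≤ 1 - c ^ 2 := by nlinarith
  exact ⟨c, √(1 - c ^ 2), by rw [Real.sq_sqrt hc]; ring, fun i h => hca ⟨i, h.symm⟩⟩

lemma rotated_half_angle_sq_add_sq {R : Type*} [CommRing R] {c d : R} (hcd : c ^ 2 + d ^ 2 = 1)
    (w : R) :
    (c * (1 - w ^ 2) - d * (2 * w)) ^ 2 + (d * (1 - w ^ 2) + c * (2 * w)) ^ 2 = (1 + w ^ 2) ^ 2 := by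
  linear_combination (1 + w ^ 2) ^ 2 * hcd

lemma exists_rotated_half_angle {a b c d : ℝ} (hab : a ^ 2 + b ^ 2 = 1) (hcd : c ^ 2 + d ^ 2 = 1)
    (hne : (a, b) ≠ (-c, -d)) :
    ∃ w : ℝ, c * (1 - w ^ 2) - d * (2 * w) = a * (1 + w ^ 2) ∧
      d * (1 - w ^ 2) + c * (2 * w) = b * (1 + w ^ 2) := by
  -- `(A, B)` is `(a, b)` rotated by `(c, -d)`, and `w = B / (1 + A)` is its half-angle tangent.
  set A := c * a + d * b
  set B := c * b - d * a
  have hAB : A ^ 2 + B ^ 2 = 1 := by linear_combination (a ^ 2 + b ^ 2) * hcd + hab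
  have hA : 1 + A ≠ 0 := by
    intro hA
    have hsum : (a + c) ^ 2 + (b + d) ^ 2 = 0 := by linear_combination hab + hcd + 2 * hA
    refine hne (Prod.ext ?_ ?_) <;> dsimp only <;> nlinarith [sq_nonneg (a + c), sq_nonneg (b + d)]
  have hden : 1 + (B / (1 + A)) ^ 2 = 2 / (1 + A) := by
    field_simp
    linear_combination hAB
  have hnum : 1 - (B / (1 + A)) ^ 2 = 2 * A / (1 + A) := by
    field_simp
    linear_combination -hAB
  refine ⟨B / (1 + A), ?_, ?_⟩
  · rw [hden, hnum]
    field_simp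
    linear_combination a * hcd
  · rw [hden, hnum]
    field_simp
    linear_combination b * hcd

theorem stmt1_general (n : ℕ) (z : Fin n → ℝ)
    (hzinj : Function.Injective z)
    (a b : Fin n → ℝ) (hab : ∀ j, a j ^ 2 + b j ^ 2 = 1) :
    ∃ p q r : Polynomial ℝ,
      (∀ t ∈ Set.Icc (-1 : ℝ) 1, r.eval t ≠ 0) ∧
      p ^ 2 + q ^ 2 = r ^ 2 ∧
      ∀ j, p.eval (z j) = a j * r.eval (z j) ∧ q.eval (z j) = b j * r.eval (z j) := by
  obtain ⟨c, d, hcd, hc⟩ := exists_sq_add_sq_eq_one_forall_ne (fun j => -a j)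
  choose w hw₁ hw₂ using fun j =>
    exists_rotated_half_angle (hab j) hcd fun h => hc j (by linarith [(Prod.mk.inj h).1])
  set U := Lagrange.interpolate Finset.univ z w
  have hU (j : Fin n) : U.eval (z j) = w j :=
    Lagrange.eval_interpolate_at_node w hzinj.injOn (Finset.mem_univ j)
  have hCcd : C c ^ 2 + C d ^ 2 = 1 := by simp only [← C_pow, ← C_add, hcd, C_1]
  refine ⟨C c * (1 - U ^ 2) - C d * (2 * U), C d * (1 - U ^ 2) + C c * (2 * U), 1 + U ^ 2,
    fun t _ => ?_, rotated_half_angle_sq_add_sq hCcd U, fun j => ?_⟩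
  · simp only [eval_add, eval_one, eval_pow]
    positivity
  · simp only [eval_sub, eval_add, eval_mul, eval_C, eval_one, eval_pow, eval_ofNat, hU]
    exact ⟨hw₁ j, hw₂ j⟩

/-- given pairwise distinct points `z₁, …, zₙ ∈ [−1,1]` and points
`(a₁,b₁), …, (aₙ,bₙ)` on the unit circle, there is a rational map `(p/r, q/r)` from
`[−1,1]` to the unit circle, without poles on `[−1,1]` (i.e. `r` does not vanish there),
with `p² + q² = r²` as a polynomial identity, taking the prescribed values at the
prescribed points: `p(zⱼ) = aⱼ r(zⱼ)` and `q(zⱼ) = bⱼ r(zⱼ)` for all `j`. -/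
theorem stmt1 (n : ℕ) (z : Fin n → ℝ) (hz : ∀ j, z j ∈ Set.Icc (-1 : ℝ) 1)
    (hzinj : Function.Injective z)
    (a b : Fin n → ℝ) (hab : ∀ j, a j ^ 2 + b j ^ 2 = 1) :
    ∃ p q r : Polynomial ℝ,
      (∀ t ∈ Set.Icc (-1 : ℝ) 1, r.eval t ≠ 0) ∧
      p ^ 2 + q ^ 2 = r ^ 2 ∧
      ∀ j, p.eval (z j) = a j * r.eval (z j) ∧ q.eval (z j) = b j * r.eval (z j) :=
  stmt1_general n z hzinj a b hab
end

section
/- Define G : ℝ³ → ℝ by G(x,y,z) = z²·(x² + y²((y − z²)² + y z³))/(x² + y⁴ + y² z⁴) for (x,y) ≠ (0,0), and G(0,0,z) = z² for all z. Then: (i) G is continuous on ℝ³ (so G is a regulous function, being rational off the z-axis); (ii) the zero set of G equals {(x,y,z) ∈ ℝ³ : z = 0} ∪ (U \ L), where U = {(x,y,z) ∈ ℝ³ : x² + y²((y − z²)² + y z³) = 0} is the horned umbrella and L = {(0,0,z) : z ∈ ℝ} is the z-axis; in particular the intersection of the zero set of G with U is (U \ L) ∪ {(0,0,0)}, the 'horn'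 of the umbrella. -/
open Classical

/-- The regulous function exhibiting the horn of the horned umbrella:
`G(x,y,z) = z²(x² + y²((y − z²)² + yz³))/(x² + y⁴ + y²z⁴)` for `(x,y) ≠ (0,0)` and
`G(0,0,z) = z²`. -/
noncomputable def hornFun : ℝ × ℝ × ℝ → ℝ := fun w =>
  if w.1 = 0 ∧ w.2.1 = 0 then w.2.2 ^ 2
  else w.2.2 ^ 2 * (w.1 ^ 2 + w.2.1 ^ 2 * ((w.2.1 - w.2.2 ^ 2) ^ 2 + w.2.1 * w.2.2 ^ 3)) /
    (w.1 ^ 2 + w.2.1 ^ 4 + w.2.1 ^ 2 * w.2.2 ^ 4)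

/-- The horned umbrella `U = {(x,y,z) : x² + y²((y − z²)² + yz³) = 0}`. -/
def hornedUmbrella : Set (ℝ × ℝ × ℝ) :=
  {w | w.1 ^ 2 + w.2.1 ^ 2 * ((w.2.1 - w.2.2 ^ 2) ^ 2 + w.2.1 * w.2.2 ^ 3) = 0}

/-- The `z`-axis `L = {(0,0,z)}`, the stick of the umbrella. -/
def zAxis : Set (ℝ × ℝ × ℝ) := {w | w.1 = 0 ∧ w.2.1 = 0}

/-!
Off the `z`-axis, write `N = x² + y²((y − z²)² + yz³)` and `D = x² + y⁴ + y²z⁴`. Expanding,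
`N = D + y³z²(z − 2)`, so `G − z² = y³z⁴(z − 2)/D`, and since `y²z⁴ ≤ D` this gives
`|G − z²| ≤ |y| |z − 2|`. The right-hand side vanishes on the axis, where `G = z²`, so `G` is
continuous there by squeezing; off the axis it is a quotient with nonvanishing denominator.
Since `D > 0` off the axis, `G` vanishes there exactly when `z = 0` or `N = 0`; and on `U ∩ {z = 0}`
the equation reduces to `x² + y⁴ = 0`.
-/

open Filter Topology

theorem continuousAt_of_abs_sub_le {X : Type*} [TopologicalSpace X] {f g h : X → ℝ} {x : X}
    (hg : ContinuousAt g x) (hh : ContinuousAt h x) (hfg : ∀ y, |f y - g y| ≤ h y)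
    (hx : h x = 0) : ContinuousAt f x := by
  have hfx : f x = g x := sub_eq_zero.mp (abs_nonpos_iff.mp (hx ▸ hfg x))
  have hsub : Tendsto (fun y => f y - g y) (𝓝 x) (𝓝 0) :=
    squeeze_zero_norm (fun y => (Real.norm_eq_abs _).trans_le (hfg y)) (hx ▸ hh.tendsto)
  simpa [ContinuousAt, hfx] using hg.tendsto.add hsub

namespace HornedUmbrella

def umbrellaPoly (w : ℝ × ℝ × ℝ) : ℝ :=
  w.1 ^ 2 + w.2.1 ^ 2 * ((w.2.1 - w.2.2 ^ 2) ^ 2 + w.2.1 * w.2.2 ^ 3)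

def hornDenom (w : ℝ × ℝ × ℝ) : ℝ :=
  w.1 ^ 2 + w.2.1 ^ 4 + w.2.1 ^ 2 * w.2.2 ^ 4

theorem mem_hornedUmbrella {w : ℝ × ℝ × ℝ} : w ∈ hornedUmbrella ↔ umbrellaPoly w = 0 := Iff.rfl

theorem hornFun_of_mem_zAxis {w : ℝ × ℝ × ℝ} (hw : w ∈ zAxis) : hornFun w = w.2.2 ^ 2 :=
  if_pos hw

theorem hornFun_of_not_mem_zAxis {w : ℝ × ℝ × ℝ} (hw : w ∉ zAxis) :
    hornFun w = w.2.2 ^ 2 * umbrellaPoly w / hornDenom w :=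
  if_neg hw

theorem umbrellaPoly_eq (w : ℝ × ℝ × ℝ) :
    umbrellaPoly w = hornDenom w + w.2.1 ^ 3 * w.2.2 ^ 2 * (w.2.2 - 2) := by
  unfold umbrellaPoly hornDenom
  ring

theorem hornDenom_pos {w : ℝ × ℝ × ℝ} (hw : w ∉ zAxis) : 0 < hornDenom w := by
  unfold hornDenom
  rcases not_and_or.mp hw with hx | hy
  · have : 0 < w.1 ^ 2 := by positivity
    positivity
  · have : 0 < w.2.1 ^ 4 := by positivity
    positivity

theorem sq_mul_le_hornDenom (w : ℝ × ℝ × ℝ) : w.2.1 ^ 2 * w.2.2 ^ 4 ≤ hornDenom w := by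
  unfold hornDenom
  nlinarith [sq_nonneg w.1, sq_nonneg (w.2.1 ^ 2)]

theorem hornFun_sub_sq {w : ℝ × ℝ × ℝ} (hw : w ∉ zAxis) :
    hornFun w - w.2.2 ^ 2 = w.2.1 * (w.2.2 - 2) * (w.2.1 ^ 2 * w.2.2 ^ 4) / hornDenom w := by
  have hD := (hornDenom_pos hw).ne'
  rw [hornFun_of_not_mem_zAxis hw, umbrellaPoly_eq, eq_div_iff hD, sub_mul,
    div_mul_cancel₀ _ hD]
  ring

theorem abs_hornFun_sub_sq_le (w : ℝ × ℝ × ℝ) :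
    |hornFun w - w.2.2 ^ 2| ≤ |w.2.1| * |w.2.2 - 2| := by
  by_cases hw : w ∈ zAxis
  · rw [hornFun_of_mem_zAxis hw, sub_self, abs_zero]
    positivity
  have hD := hornDenom_pos hw
  rw [hornFun_sub_sq hw, abs_div, abs_of_pos hD, div_le_iff₀ hD, abs_mul, abs_mul,
    abs_of_nonneg (by positivity : (0 : ℝ) ≤ w.2.1 ^ 2 * w.2.2 ^ 4)]
  exact mul_le_mul_of_nonneg_left (sq_mul_le_hornDenom w) (by positivity)

theorem continuousAt_hornFun_of_mem_zAxis {w : ℝ × ℝ × ℝ} (hw : w ∈ zAxis) :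
    ContinuousAt hornFun w :=
  continuousAt_of_abs_sub_le (by fun_prop) (by fun_prop) abs_hornFun_sub_sq_le
    (by rw [hw.2, abs_zero, zero_mul])

theorem continuousAt_hornFun_of_not_mem_zAxis {w : ℝ × ℝ × ℝ} (hw : w ∉ zAxis) :
    ContinuousAt hornFun w := by
  have hL : IsClosed zAxis :=
    (isClosed_eq continuous_fst continuous_const).inter
      (isClosed_eq continuous_snd.fst continuous_const)
  have hev : (fun v => v.2.2 ^ 2 * umbrellaPoly v / hornDenom v) =ᶠ[𝓝 w] hornFun := by
    filter_upwards [hL.isOpen_compl.mem_nhds hw] with v hv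
    exact (hornFun_of_not_mem_zAxis hv).symm
  refine ContinuousAt.congr ?_ hev
  exact ContinuousAt.div (by unfold umbrellaPoly; fun_prop) (by unfold hornDenom; fun_prop)
    (hornDenom_pos hw).ne'

theorem continuous_hornFun : Continuous hornFun :=
  continuous_iff_continuousAt.mpr fun w =>
    if hw : w ∈ zAxis then continuousAt_hornFun_of_mem_zAxis hw
    else continuousAt_hornFun_of_not_mem_zAxis hw

theorem hornFun_eq_zero_iff (w : ℝ × ℝ × ℝ) :
    hornFun w = 0 ↔ w.2.2 = 0 ∨ w ∈ hornedUmbrella \ zAxis := by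
  by_cases hw : w ∈ zAxis
  · simp [hornFun_of_mem_zAxis hw, hw]
  · simp [hornFun_of_not_mem_zAxis hw, hw, (hornDenom_pos hw).ne', mem_hornedUmbrella]

theorem setOf_z_eq_zero_inter_hornedUmbrella :
    {w : ℝ × ℝ × ℝ | w.2.2 = 0} ∩ hornedUmbrella = {((0 : ℝ), (0 : ℝ), (0 : ℝ))} := by
  ext ⟨x, y, z⟩
  simp only [Set.mem_inter_iff, Set.mem_ofPred_eq, mem_hornedUmbrella, umbrellaPoly,
    Set.mem_singleton_iff, Prod.mk.injEq]
  constructor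
  · rintro ⟨rfl, hU⟩
    have hxy : x ^ 2 + (y ^ 2) ^ 2 = 0 := by linear_combination hU
    have hx : x = 0 := by nlinarith [sq_nonneg x, sq_nonneg (y ^ 2)]
    have hy : y = 0 := by
      subst hx
      simpa using hxy
    exact ⟨hx, hy, rfl⟩
  · rintro ⟨rfl, rfl, rfl⟩
    norm_num

end HornedUmbrella

open HornedUmbrella in
/-- the function `hornFun` is continuous on `ℝ³` (hence regulous, being
rational off the `z`-axis); its zero set is `{z = 0} ∪ (U \ L)`, and the intersection of
its zero set with the horned umbrella `U` is the horn `(U \ L) ∪ {(0,0,0)}`. -/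
theorem stmt13 :
    Continuous hornFun ∧
    {w : ℝ × ℝ × ℝ | hornFun w = 0} = {w : ℝ × ℝ × ℝ | w.2.2 = 0} ∪ (hornedUmbrella \ zAxis) ∧
    {w : ℝ × ℝ × ℝ | hornFun w = 0} ∩ hornedUmbrella =
      (hornedUmbrella \ zAxis) ∪ {((0 : ℝ), (0 : ℝ), (0 : ℝ))} := by
  have hzero : {w : ℝ × ℝ × ℝ | hornFun w = 0} =
      {w : ℝ × ℝ × ℝ | w.2.2 = 0} ∪ (hornedUmbrella \ zAxis) :=
    Set.ext hornFun_eq_zero_iff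
  refine ⟨continuous_hornFun, hzero, ?_⟩
  rw [hzero, Set.union_inter_distrib_right, setOf_z_eq_zero_inter_hornedUmbrella,
    Set.inter_eq_left.mpr Set.sdiff_subset, Set.union_comm]
end
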